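/- Let $f_1 \in \mathrm{Sym}^{d_1}V_1$ and $f_2 \in \mathrm{Sym}^{d_2}V_2$ be nonzero homogeneous polynomials in disjoint variables and let $t = f_1 f_2 \in \mathrm{Sym}^\bullet(V_1 \oplus V_2)$. Then the apolar ideal of $t$ in $\mathrm{Sym}^\bullet(V_1^* \oplus V_2^*)$ equals the sum of the extensions of the apolar ideals of the factors: $t^\perp = (f_1^\perp)^{ext} + (f_2^\perp)^{ext}$, where $(f_i^\perp)^{ext}$ denotes the ideal generated by $f_i^\perp \subseteq \mathrm{Sym}^\bullet V_i^*$ in $\mathrm{Sym}^\bullet(V_1^* \oplus V_2^*)$. -/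

import Mathlib

open MvPolynomial

lemma pderiv_comm' {σ : Type*} [DecidableEq σ] (i j : σ) (f : MvPolynomial σ ℂ) :
    pderiv i (pderiv j f) = pderiv j (pderiv i f) := by
  induction f using MvPolynomial.induction_on with
  | C a => simp
  | add p q hp hq => simp [hp, hq]
  | mul_X p k hp =>
      simp only [pderiv_mul, map_add, hp, pderiv_X, Pi.single_apply]
      split_ifs <;> simp <;> ring

/-- The apolarity action: the algebra homomorphism from the polynomial ring in the
dual variables to endomorphisms of the polynomial ring, sending each dual variable to
the corresponding partial derivative. -/
noncomputable def diffHom (σ : Type*) [DecidableEq σ] :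
    MvPolynomial σ ℂ →ₐ[ℂ] Module.End ℂ (MvPolynomial σ ℂ) :=
  letI s : Set (Module.End ℂ (MvPolynomial σ ℂ)) :=
    Set.range fun i : σ => ((pderiv i : Derivation ℂ _ _) : MvPolynomial σ ℂ →ₗ[ℂ] MvPolynomial σ ℂ)
  letI hcomm : ∀ a ∈ s, ∀ b ∈ s, a * b = b * a := by
    rintro _ ⟨i, rfl⟩ _ ⟨j, rfl⟩
    exact LinearMap.ext fun f => pderiv_comm' i j f
  letI : CommSemiring (Algebra.adjoin ℂ s) := Algebra.adjoinCommSemiringOfComm ℂ hcomm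
  (Algebra.adjoin ℂ s).val.comp
    (aeval fun i : σ => (⟨_, Algebra.subset_adjoin ⟨i, rfl⟩⟩ : Algebra.adjoin ℂ s))

/-- The apolar ideal of a polynomial: the annihilator under the apolarity action. -/
noncomputable def apolarIdeal {σ : Type*} [DecidableEq σ] (f : MvPolynomial σ ℂ) :
    Ideal (MvPolynomial σ ℂ) where
  carrier := {D | diffHom σ D f = 0}
  zero_mem' := by simp
  add_mem' := by
    intro a b ha hb
    simp only [Set.mem_setOf_eq, map_add, LinearMap.add_apply] at *
    rw [ha, hb, add_zero]
  smul_mem' := by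
    intro c x hx
    simp only [Set.mem_setOf_eq, smul_eq_mul, map_mul, Module.End.mul_apply] at *
    rw [hx, map_zero]

lemma mem_apolarIdeal_iff {σ : Type*} [DecidableEq σ] (f D : MvPolynomial σ ℂ) :
    D ∈ apolarIdeal f ↔ diffHom σ D f = 0 := Iff.rfl

/-! Identify `ℂ[σ ⊕ τ]` with `ℂ[σ] ⊗ ℂ[τ]`. Since derivations in the variables of one factor do
not see the other factor, the map `D ↦ D(f₁ f₂)` becomes the tensor product of the maps
`p ↦ p(f₁)` and `q ↦ q(f₂)`, whose kernels are `f₁^⊥` and `f₂^⊥`. Over a field the kernel of a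
tensor product `φ₁ ⊗ φ₂` is `ker φ₁ ⊗ B + A ⊗ ker φ₂`: write each `φᵢ` as a surjection onto its
image followed by an inclusion, use right exactness of `⊗` for the surjections and flatness for
the inclusions. -/

open scoped TensorProduct

theorem LinearMap.exact_subtype_ker_rangeRestrict {R M N : Type*} [Ring R]
    [AddCommGroup M] [Module R M] [AddCommGroup N] [Module R N] (f : M →ₗ[R] N) :
    Function.Exact (LinearMap.ker f).subtype f.rangeRestrict := by
  rw [LinearMap.exact_iff, LinearMap.ker_rangeRestrict, Submodule.range_subtype]

theorem TensorProduct.ker_map_of_field {K M N P Q : Type*} [Field K]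
    [AddCommGroup M] [Module K M] [AddCommGroup N] [Module K N]
    [AddCommGroup P] [Module K P] [AddCommGroup Q] [Module K Q]
    (f : M →ₗ[K] N) (g : P →ₗ[K] Q) :
    LinearMap.ker (TensorProduct.map f g) =
      LinearMap.range (LinearMap.rTensor P (LinearMap.ker f).subtype) ⊔
        LinearMap.range (LinearMap.lTensor M (LinearMap.ker g).subtype) := by
  have hfactor : TensorProduct.map f g =
      TensorProduct.map (LinearMap.range f).subtype (LinearMap.range g).subtype ∘ₗ
        TensorProduct.map f.rangeRestrict g.rangeRestrict := by
    rw [← TensorProduct.map_comp]; rfl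
  rw [hfactor, LinearMap.ker_comp_of_ker_eq_bot, TensorProduct.map_ker
    f.exact_subtype_ker_rangeRestrict f.surjective_rangeRestrict
    g.exact_subtype_ker_rangeRestrict g.surjective_rangeRestrict, sup_comm]
  exact LinearMap.ker_eq_bot.mpr (TensorProduct.map_injective_of_flat_flat _ _
    (Submodule.injective_subtype _) (Submodule.injective_subtype _))

namespace MvPolynomial

theorem tensorEquivSum_tmul {R σ τ : Type*} [CommSemiring R]
    (p : MvPolynomial σ R) (q : MvPolynomial τ R) :
    tensorEquivSum R σ τ R (p ⊗ₜ q) = rename Sum.inl p * rename Sum.inr q := by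
  have hleft : (tensorEquivSum R σ τ R).toAlgHom.comp Algebra.TensorProduct.includeLeft =
      rename Sum.inl := algHom_ext fun i => by simp
  have hright : (tensorEquivSum R σ τ R).toAlgHom.comp Algebra.TensorProduct.includeRight =
      rename Sum.inr := algHom_ext fun i => by simp
  rw [← mul_one p, ← one_mul q, ← Algebra.TensorProduct.tmul_mul_tmul, map_mul, ← hleft,
    ← hright]
  simp

theorem pderiv_inl_rename_inr {R σ τ : Type*} [CommSemiring R] (i : σ) (q : MvPolynomial τ R) :
    pderiv (Sum.inl i) (rename Sum.inr q) = 0 := by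
  induction q using MvPolynomial.induction_on with
  | C a => simp
  | add p q hp hq => simp [hp, hq]
  | mul_X p j hp => simp [hp]

theorem pderiv_inr_rename_inl {R σ τ : Type*} [CommSemiring R] (j : τ) (p : MvPolynomial σ R) :
    pderiv (Sum.inr j) (rename Sum.inl p) = 0 := by
  induction p using MvPolynomial.induction_on with
  | C a => simp
  | add p q hp hq => simp [hp, hq]
  | mul_X p i hp => simp [hp]

theorem tensorEquivSum_mem_map_rename_inl {R σ τ : Type*} [CommRing R]
    (I : Ideal (MvPolynomial σ R)) {x : MvPolynomial σ R ⊗[R] MvPolynomial τ R}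
    (hx : x ∈ LinearMap.range
      (LinearMap.rTensor (MvPolynomial τ R) (I.restrictScalars R).subtype)) :
    tensorEquivSum R σ τ R x ∈ I.map (rename Sum.inl) := by
  obtain ⟨y, rfl⟩ := hx
  induction y using TensorProduct.induction_on with
  | zero => simp
  | tmul p q =>
    rw [LinearMap.rTensor_tmul, tensorEquivSum_tmul]
    exact Ideal.mul_mem_right _ _ (Ideal.mem_map_of_mem _ p.2)
  | add y z hy hz => rw [map_add, map_add]; exact add_mem hy hz

theorem tensorEquivSum_mem_map_rename_inr {R σ τ : Type*} [CommRing R]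
    (I : Ideal (MvPolynomial τ R)) {x : MvPolynomial σ R ⊗[R] MvPolynomial τ R}
    (hx : x ∈ LinearMap.range
      (LinearMap.lTensor (MvPolynomial σ R) (I.restrictScalars R).subtype)) :
    tensorEquivSum R σ τ R x ∈ I.map (rename Sum.inr) := by
  obtain ⟨y, rfl⟩ := hx
  induction y using TensorProduct.induction_on with
  | zero => simp
  | tmul p q =>
    rw [LinearMap.lTensor_tmul, tensorEquivSum_tmul]
    exact Ideal.mul_mem_left _ _ (Ideal.mem_map_of_mem _ q.2)
  | add y z hy hz => rw [map_add, map_add]; exact add_mem hy hz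

end MvPolynomial

section Apolarity

variable {σ τ : Type*} [DecidableEq σ] [DecidableEq τ]

theorem diffHom_X_apply (i : σ) (f : MvPolynomial σ ℂ) : diffHom σ (X i) f = pderiv i f := by
  simp [diffHom]

theorem diffHom_C_apply (a : ℂ) (f : MvPolynomial σ ℂ) : diffHom σ (C a) f = a • f := by
  rw [← algebraMap_eq, AlgHom.commutes, Module.algebraMap_end_apply]

theorem diffHom_mul_apply (p q f : MvPolynomial σ ℂ) :
    diffHom σ (p * q) f = diffHom σ p (diffHom σ q f) := by
  rw [map_mul, Module.End.mul_apply]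

theorem diffHom_rename_inl_apply (p f : MvPolynomial σ ℂ) (g : MvPolynomial τ ℂ) :
    diffHom (σ ⊕ τ) (rename Sum.inl p) (rename Sum.inl f * rename Sum.inr g) =
      rename Sum.inl (diffHom σ p f) * rename Sum.inr g := by
  induction p using MvPolynomial.induction_on generalizing f with
  | C a => rw [rename_C, diffHom_C_apply, diffHom_C_apply, map_smul, smul_mul_assoc]
  | add p q hp hq => simp only [map_add, LinearMap.add_apply, hp, hq, add_mul]
  | mul_X p i hp =>
    rw [map_mul (rename _) p, rename_X, diffHom_mul_apply, diffHom_X_apply, pderiv_mul,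
      pderiv_inl_rename_inr, mul_zero, add_zero, pderiv_rename Sum.inl_injective, hp,
      diffHom_mul_apply, diffHom_X_apply]

theorem diffHom_rename_inr_apply (q : MvPolynomial τ ℂ) (f : MvPolynomial σ ℂ)
    (g : MvPolynomial τ ℂ) :
    diffHom (σ ⊕ τ) (rename Sum.inr q) (rename Sum.inl f * rename Sum.inr g) =
      rename Sum.inl f * rename Sum.inr (diffHom τ q g) := by
  induction q using MvPolynomial.induction_on generalizing g with
  | C a => rw [rename_C, diffHom_C_apply, diffHom_C_apply, map_smul, mul_smul_comm]
  | add p q hp hq => simp only [map_add, LinearMap.add_apply, hp, hq, mul_add]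
  | mul_X q j hq =>
    rw [map_mul (rename _) q, rename_X, diffHom_mul_apply, diffHom_X_apply, pderiv_mul,
      pderiv_inr_rename_inl, zero_mul, zero_add, pderiv_rename Sum.inr_injective, hq,
      diffHom_mul_apply, diffHom_X_apply]

variable (σ) in
noncomputable def apolarMap (f : MvPolynomial σ ℂ) : MvPolynomial σ ℂ →ₗ[ℂ] MvPolynomial σ ℂ :=
  LinearMap.applyₗ f ∘ₗ (diffHom σ).toLinearMap

theorem apolarMap_apply (f D : MvPolynomial σ ℂ) : apolarMap σ f D = diffHom σ D f := rfl

theorem ker_apolarMap (f : MvPolynomial σ ℂ) :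
    LinearMap.ker (apolarMap σ f) = (apolarIdeal f).restrictScalars ℂ := rfl

theorem apolarMap_mul_comp_tensorEquivSum (f : MvPolynomial σ ℂ) (g : MvPolynomial τ ℂ) :
    apolarMap (σ ⊕ τ) (rename Sum.inl f * rename Sum.inr g) ∘ₗ
        (tensorEquivSum ℂ σ τ ℂ).toLinearMap =
      (tensorEquivSum ℂ σ τ ℂ).toLinearMap ∘ₗ
        TensorProduct.map (apolarMap σ f) (apolarMap τ g) := by
  refine TensorProduct.ext' fun p q => ?_
  simp only [LinearMap.comp_apply, AlgEquiv.toLinearMap_apply, TensorProduct.map_tmul,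
    tensorEquivSum_tmul, apolarMap_apply]
  rw [diffHom_mul_apply, diffHom_rename_inr_apply, diffHom_rename_inl_apply]

theorem map_rename_inl_apolarIdeal_le (f : MvPolynomial σ ℂ) (g : MvPolynomial τ ℂ) :
    (apolarIdeal f).map (rename Sum.inl) ≤ apolarIdeal (rename Sum.inl f * rename Sum.inr g) := by
  refine Ideal.map_le_iff_le_comap.mpr fun p hp => ?_
  rw [Ideal.mem_comap, mem_apolarIdeal_iff, diffHom_rename_inl_apply,
    (mem_apolarIdeal_iff f p).mp hp, map_zero, zero_mul]

theorem map_rename_inr_apolarIdeal_le (f : MvPolynomial σ ℂ) (g : MvPolynomial τ ℂ) :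
    (apolarIdeal g).map (rename Sum.inr) ≤ apolarIdeal (rename Sum.inl f * rename Sum.inr g) := by
  refine Ideal.map_le_iff_le_comap.mpr fun q hq => ?_
  rw [Ideal.mem_comap, mem_apolarIdeal_iff, diffHom_rename_inr_apply,
    (mem_apolarIdeal_iff g q).mp hq, map_zero, mul_zero]

theorem apolarIdeal_mul_le (f : MvPolynomial σ ℂ) (g : MvPolynomial τ ℂ) :
    apolarIdeal (rename Sum.inl f * rename Sum.inr g) ≤
      (apolarIdeal f).map (rename Sum.inl) ⊔ (apolarIdeal g).map (rename Sum.inr) := by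
  intro D hD
  have hker : (tensorEquivSum ℂ σ τ ℂ).symm D ∈
      LinearMap.ker (TensorProduct.map (apolarMap σ f) (apolarMap τ g)) := by
    refine (tensorEquivSum ℂ σ τ ℂ).injective ?_
    have := LinearMap.congr_fun (apolarMap_mul_comp_tensorEquivSum f g)
      ((tensorEquivSum ℂ σ τ ℂ).symm D)
    simp only [LinearMap.comp_apply, AlgEquiv.toLinearMap_apply, AlgEquiv.apply_symm_apply,
      apolarMap_apply] at this
    rw [← this, (mem_apolarIdeal_iff _ D).mp hD, map_zero]
  rw [TensorProduct.ker_map_of_field, ker_apolarMap, ker_apolarMap] at hker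
  obtain ⟨x, hx, y, hy, hxy⟩ := Submodule.mem_sup.mp hker
  rw [← (tensorEquivSum ℂ σ τ ℂ).apply_symm_apply D, ← hxy, map_add]
  exact add_mem (Ideal.mem_sup_left (tensorEquivSum_mem_map_rename_inl _ hx))
    (Ideal.mem_sup_right (tensorEquivSum_mem_map_rename_inr _ hy))

end Apolarity

theorem apolarIdeal_mul_general (m₁ m₂ : ℕ)
    (f₁ : MvPolynomial (Fin m₁) ℂ) (f₂ : MvPolynomial (Fin m₂) ℂ) :
    apolarIdeal (rename Sum.inl f₁ * rename Sum.inr f₂) =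
      Ideal.map (rename (Sum.inl : Fin m₁ → Fin m₁ ⊕ Fin m₂)) (apolarIdeal f₁)
        ⊔ Ideal.map (rename (Sum.inr : Fin m₂ → Fin m₁ ⊕ Fin m₂)) (apolarIdeal f₂) :=
  le_antisymm (apolarIdeal_mul_le f₁ f₂)
    (sup_le (map_rename_inl_apolarIdeal_le f₁ f₂) (map_rename_inr_apolarIdeal_le f₁ f₂))

/-- For nonzero homogeneous polynomials `f₁`, `f₂` in disjoint sets of variables, the apolar
ideal of `t = f₁ f₂` equals the sum of the extensions of the apolar ideals of the factors. -/
theorem apolarIdeal_mul (m₁ m₂ d₁ d₂ : ℕ)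
    (f₁ : MvPolynomial (Fin m₁) ℂ) (f₂ : MvPolynomial (Fin m₂) ℂ)
    (hf₁ : f₁.IsHomogeneous d₁) (hf₂ : f₂.IsHomogeneous d₂)
    (hf₁0 : f₁ ≠ 0) (hf₂0 : f₂ ≠ 0) :
    apolarIdeal (rename Sum.inl f₁ * rename Sum.inr f₂) =
      Ideal.map (rename (Sum.inl : Fin m₁ → Fin m₁ ⊕ Fin m₂)) (apolarIdeal f₁)
        ⊔ Ideal.map (rename (Sum.inr : Fin m₂ → Fin m₁ ⊕ Fin m₂)) (apolarIdeal f₂) :=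
  apolarIdeal_mul_general m₁ m₂ f₁ f₂
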